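/- In Max-Welter, if A = (a_1, ..., a_k) with k ≥ 3 and a_1 ≤ k - 1, then the Sprague-Grundy value of (a_1, ..., a_k) equals the Sprague-Grundy value of the position (a_2 - 1, a_3 - 1, ..., a_k - 1) of size k - 1. -/
import Mathlib


/-- A move in Max-Welter: the coin on the largest occupied square moves to an
empty square strictly to its left. -/
def MWMove (s t : Finset ℕ) : Prop :=
  ∃ (hs : s.Nonempty) (j : ℕ), j < s.max' hs ∧ j ∉ s ∧
    t = insert j (s.erase (s.max' hs))

theorem MWMove.sum_lt {s t : Finset ℕ} (h : MWMove s t) :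
    t.sum id < s.sum id := by
  obtain ⟨hs, j, hj, hjs, rfl⟩ := h
  have hm : s.max' hs ∈ s := s.max'_mem hs
  have hje : j ∉ s.erase (s.max' hs) := fun hc => hjs (Finset.mem_of_mem_erase hc)
  have h2 : (s.erase (s.max' hs)).sum id + s.max' hs = s.sum id :=
    Finset.sum_erase_add s id hm
  rw [Finset.sum_insert hje]
  simp only [id] at *
  omega

/-- Normal-play Sprague-Grundy value of a Max-Welter position. -/
noncomputable def grundy (s : Finset ℕ) : ℕ :=
  sInf {n : ℕ | ∀ t, ∀ _h : MWMove s t, grundy t ≠ n}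
termination_by s.sum id
decreasing_by exact _h.sum_lt

open Classical in
/-- Misère Sprague-Grundy value: terminal positions get value 1. -/
noncomputable def mgrundy (s : Finset ℕ) : ℕ :=
  if ∀ t, ¬ MWMove s t then 1
  else sInf {n : ℕ | ∀ t, ∀ _h : MWMove s t, mgrundy t ≠ n}
termination_by s.sum id
decreasing_by exact _h.sum_lt

/-- Normal play: `s` is a P-position iff every move leads to a non-P-position. -/
def MWPPos (s : Finset ℕ) : Prop :=
  ∀ t, ∀ _h : MWMove s t, ¬ MWPPos t
termination_by s.sum id
decreasing_by exact _h.sum_lt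

/-- Misère play: the player to move wins iff there is no move (the opponent made
the last move and loses), or some move leads to a position losing for the opponent. -/
def MWMisereWin (s : Finset ℕ) : Prop :=
  (∀ t, ¬ MWMove s t) ∨ ∃ t, ∃ _h : MWMove s t, ¬ MWMisereWin t
termination_by s.sum id
decreasing_by exact _h.sum_lt



lemma grundy_def (s : Finset ℕ) :
    grundy s = sInf {n : ℕ | ∀ t, MWMove s t → grundy t ≠ n} := by
  rw [grundy]

lemma grundy_congr {s₁ s₂ : Finset ℕ}
    (h : ∀ n, (∃ t, MWMove s₁ t ∧ grundy t = n) ↔ (∃ t, MWMove s₂ t ∧ grundy t = n)) :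
    grundy s₁ = grundy s₂ := by
  rw [grundy_def s₁, grundy_def s₂]
  congr 1
  ext n
  simp only [Set.mem_setOf_eq]
  constructor
  · intro H t ht hn
    obtain ⟨t', ht', hn'⟩ := (h n).mpr ⟨t, ht, hn⟩
    exact H t' ht' hn'
  · intro H t ht hn
    obtain ⟨t', ht', hn'⟩ := (h n).mp ⟨t, ht, hn⟩
    exact H t' ht' hn'

lemma mwmove_iff {s : Finset ℕ} (hs : s.Nonempty) (t : Finset ℕ) :
    MWMove s t ↔ ∃ j, j < s.max' hs ∧ j ∉ s ∧ t = insert j (s.erase (s.max' hs)) := by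
  constructor
  · rintro ⟨hs', j, h⟩; exact ⟨j, h⟩
  · rintro ⟨j, h⟩; exact ⟨hs, j, h⟩

lemma key : ∀ (n : ℕ) (s : Finset ℕ) (m : ℕ), s.sum id = n → m ∈ s →
    (∀ x ∈ s, m ≤ x) → 2 ≤ s.card → m + 1 ≤ s.card →
    grundy s = grundy ((s.erase m).image (fun x => x - 1)) := by
  intro n
  induction n using Nat.strong_induction_on with
  | _ n ih =>
  intro s m hsum hm hlb h2 hmk
  have hne : s.Nonempty := ⟨m, hm⟩
  set M := s.max' hne with hMdef
  have hM : M ∈ s := s.max'_mem hne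
  have hMle : ∀ x ∈ s, x ≤ M := fun x hx => s.le_max' x hx
  have hmM : m < M := by
    obtain ⟨a, ha, b, hb, hab⟩ := Finset.one_lt_card.mp h2
    have h1 := hlb a ha; have h2 := hlb b hb
    have h3 := hMle a ha; have h4 := hMle b hb
    rcases Nat.lt_or_ge m M with h | h
    · exact h
    · omega
  have hmM' : m ∈ s.erase M := Finset.mem_erase.mpr ⟨Nat.ne_of_lt hmM, hm⟩
  set B := (s.erase M).erase m with hBdef
  have hsm : insert m B = s.erase M := Finset.insert_erase hmM'
  have hBmem : ∀ x, x ∈ B ↔ (x ∈ s ∧ x ≠ M ∧ m + 1 ≤ x) := by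
    intro x
    rw [hBdef, Finset.mem_erase, Finset.mem_erase]
    constructor
    · rintro ⟨h1, h2, h3⟩
      have := hlb x h3
      exact ⟨h3, h2, by omega⟩
    · rintro ⟨h1, h2, h3⟩
      exact ⟨by omega, h2, h1⟩
  have hmB : m ∉ B := fun h => by have := ((hBmem m).mp h).2.2; omega
  set s' := (s.erase m).image (fun x => x - 1) with hs'def
  set B1 := B.image (fun x => x - 1) with hB1def
  have hs' : ∀ y, y ∈ s' ↔ (y + 1 ∈ s ∧ m ≤ y) := by
    intro y
    rw [hs'def, Finset.mem_image]
    constructor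
    · rintro ⟨x, hx, rfl⟩
      obtain ⟨h1, h2⟩ := Finset.mem_erase.mp hx
      have := hlb x h2
      have hx1 : x - 1 + 1 = x := by omega
      exact ⟨by rw [hx1]; exact h2, by omega⟩
    · rintro ⟨h1, h2⟩
      exact ⟨y + 1, Finset.mem_erase.mpr ⟨by omega, h1⟩, by omega⟩
  have hB1 : ∀ y, y ∈ B1 ↔ (y + 1 ∈ s ∧ y + 1 ≠ M ∧ m ≤ y) := by
    intro y
    rw [hB1def, Finset.mem_image]
    constructor
    · rintro ⟨x, hx, rfl⟩
      obtain ⟨h1, h2, h3⟩ := (hBmem x).mp hx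
      have hx1 : x - 1 + 1 = x := by omega
      rw [hx1]
      exact ⟨h1, h2, by omega⟩
    · rintro ⟨h1, h2, h3⟩
      exact ⟨y + 1, (hBmem (y + 1)).mpr ⟨h1, h2, by omega⟩, by omega⟩
  have hMpos : 1 ≤ M := by omega
  have hne' : s'.Nonempty :=
    ⟨M - 1, (hs' _).mpr ⟨by rw [show M - 1 + 1 = M by omega]; exact hM, by omega⟩⟩
  have hmax' : s'.max' hne' = M - 1 := by
    apply le_antisymm
    · apply Finset.max'_le
      intro y hy
      obtain ⟨h1, h2⟩ := (hs' y).mp hy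
      have := hMle _ h1
      omega
    · exact Finset.le_max' _ _ ((hs' _).mpr ⟨by rw [show M - 1 + 1 = M by omega]; exact hM, by omega⟩)
  have hs'e : s'.erase (M - 1) = B1 := by
    ext y
    rw [Finset.mem_erase, hs' y, hB1 y]
    constructor
    · rintro ⟨h0, h1, h2⟩; exact ⟨h1, by omega, h2⟩
    · rintro ⟨h1, h2, h3⟩; exact ⟨by omega, h1, h3⟩
  -- sums and cards
  have e1 : M + (s.erase M).sum id = s.sum id := Finset.add_sum_erase s id hM
  have e2 : m + B.sum id = (s.erase M).sum id := Finset.add_sum_erase _ id hmM'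
  have hc1 : (s.erase M).card = s.card - 1 := Finset.card_erase_of_mem hM
  have hc2 : B.card = s.card - 2 := by
    rw [hBdef, Finset.card_erase_of_mem hmM', hc1]
    omega
  have hBinj : Set.InjOn (fun x => x - 1) ↑B := by
    intro x hx y hy hxy
    have h1 := ((hBmem x).mp hx).2.2
    have h2 := ((hBmem y).mp hy).2.2
    simp only at hxy
    omega
  have hB1card : B1.card = B.card := Finset.card_image_of_injOn hBinj
  have hB1sum : B1.sum id ≤ B.sum id := by
    rw [hB1def, Finset.sum_image hBinj]
    exact Finset.sum_le_sum (fun i _ => Nat.sub_le i 1)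
  -- claim A
  have claimA : ∀ j, m < j → j < M → j ∉ s →
      grundy (insert j (insert m B)) = grundy (insert (j - 1) B1) := by
    intro j hjm hjM hjs
    have hjnot : j ∉ insert m B := by
      rw [hsm]; exact fun h => hjs (Finset.mem_of_mem_erase h)
    have hjB : j ∉ B := fun h => hjs ((hBmem j).mp h).1
    have hmnot : m ∉ insert j B := by
      simp only [Finset.mem_insert]
      push_neg
      exact ⟨by omega, hmB⟩
    have hts : (insert j (insert m B)).sum id = j + (m + B.sum id) := by
      rw [Finset.sum_insert hjnot, Finset.sum_insert hmB]
      rfl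
    have htlt : (insert j (insert m B)).sum id < n := by rw [hts]; omega
    have htc : (insert j (insert m B)).card = s.card := by
      rw [Finset.card_insert_of_notMem hjnot, Finset.card_insert_of_notMem hmB, hc2]
      omega
    have hlb' : ∀ x ∈ insert j (insert m B), m ≤ x := by
      intro x hx
      rcases Finset.mem_insert.mp hx with h' | hx2
      · omega
      · rcases Finset.mem_insert.mp hx2 with h' | hx3
        · omega
        · have := ((hBmem x).mp hx3).2.2; omega
    have hrec := ih _ htlt (insert j (insert m B)) m rfl
      (Finset.mem_insert.mpr (Or.inr (Finset.mem_insert_self _ _))) hlb'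
      (by omega) (by omega)
    rw [hrec]
    have hterase : (insert j (insert m B)).erase m = insert j B := by
      rw [Finset.insert_comm, Finset.erase_insert hmnot]
    rw [hterase, Finset.image_insert, ← hB1def]
  -- claim B
  have claimB : ∀ j, j < m →
      grundy (insert j (insert m B)) = grundy (insert (m - 1) B1) := by
    intro j hjm
    have hjnot : j ∉ insert m B := by
      rw [hsm]
      intro h
      have := hlb _ (Finset.mem_of_mem_erase h)
      omega
    have hts : (insert j (insert m B)).sum id = j + (m + B.sum id) := by
      rw [Finset.sum_insert hjnot, Finset.sum_insert hmB]
      rfl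
    have htlt : (insert j (insert m B)).sum id < n := by rw [hts]; omega
    have htc : (insert j (insert m B)).card = s.card := by
      rw [Finset.card_insert_of_notMem hjnot, Finset.card_insert_of_notMem hmB, hc2]
      omega
    have hlb' : ∀ x ∈ insert j (insert m B), j ≤ x := by
      intro x hx
      rcases Finset.mem_insert.mp hx with h' | hx2
      · omega
      · rcases Finset.mem_insert.mp hx2 with h' | hx3
        · omega
        · have := ((hBmem x).mp hx3).2.2; omega
    have hrec := ih _ htlt (insert j (insert m B)) j rfl
      (Finset.mem_insert_self _ _) hlb' (by omega) (by omega)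
    rw [hrec, Finset.erase_insert hjnot, Finset.image_insert, ← hB1def]
  -- claim C
  have claimC : ∀ j1 j2, j1 < m → j2 < m →
      grundy (insert j1 B1) = grundy (insert j2 B1) := by
    intro j1 j2 h1 h2
    rcases Nat.lt_or_ge m 2 with hm2 | hm2
    · have : j1 = j2 := by omega
      rw [this]
    · have key1 : ∀ j, j < m →
          grundy (insert j B1) = grundy (B1.image (fun x => x - 1)) := by
        intro j hj
        have hjB1 : j ∉ B1 := fun h => by have := ((hB1 j).mp h).2.2; omega
        have hsumt : (insert j B1).sum id = j + B1.sum id := Finset.sum_insert hjB1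
        have hlt : (insert j B1).sum id < n := by rw [hsumt]; omega
        have hcard : (insert j B1).card = s.card - 1 := by
          rw [Finset.card_insert_of_notMem hjB1, hB1card, hc2]
          omega
        have hlb' : ∀ x ∈ insert j B1, j ≤ x := by
          intro x hx
          rcases Finset.mem_insert.mp hx with h' | hx2
          · omega
          · have := ((hB1 x).mp hx2).2.2; omega
        have hrec := ih _ hlt (insert j B1) j rfl (Finset.mem_insert_self _ _)
          hlb' (by omega) (by omega)
        rw [hrec, Finset.erase_insert hjB1]
      rw [key1 j1 h1, key1 j2 h2]
  -- move characterizations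
  have hmoves : ∀ t, MWMove s t ↔ ∃ j, j < M ∧ j ∉ s ∧ t = insert j (insert m B) := by
    intro t
    rw [mwmove_iff hne, ← hMdef, ← hsm]
  have hmoves' : ∀ t, MWMove s' t ↔ ∃ j, j < M - 1 ∧ j ∉ s' ∧ t = insert j B1 := by
    intro t
    rw [mwmove_iff hne', hmax', hs'e]
  apply grundy_congr
  intro q
  constructor
  · rintro ⟨t, ht, hq⟩
    obtain ⟨j, hjM, hjs, rfl⟩ := (hmoves t).mp ht
    have hjm : j ≠ m := fun h => hjs (h ▸ hm)
    rcases Nat.lt_or_ge j m with h | h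
    · refine ⟨insert (m - 1) B1, (hmoves' _).mpr ⟨m - 1, by omega, ?_, rfl⟩, ?_⟩
      · intro hc; have := (hs' _).mp hc; omega
      · rw [← claimB j h]; exact hq
    · have h' : m < j := by omega
      refine ⟨insert (j - 1) B1, (hmoves' _).mpr ⟨j - 1, by omega, ?_, rfl⟩, ?_⟩
      · intro hc
        obtain ⟨hc1, hc2⟩ := (hs' _).mp hc
        rw [show j - 1 + 1 = j by omega] at hc1
        exact hjs hc1
      · rw [← claimA j h' hjM hjs]; exact hq
  · rintro ⟨t, ht, hq⟩
    obtain ⟨j', hj'M, hj's, rfl⟩ := (hmoves' t).mp ht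
    rcases Nat.lt_or_ge j' m with h | h
    · have hm1 : 1 ≤ m := by omega
      have h0s : (0 : ℕ) ∉ s := fun hc => by have := hlb 0 hc; omega
      refine ⟨insert 0 (insert m B), (hmoves _).mpr ⟨0, by omega, h0s, rfl⟩, ?_⟩
      rw [claimB 0 (by omega), claimC (m - 1) j' (by omega) h]
      exact hq
    · have hjs : j' + 1 ∉ s := fun hc => hj's ((hs' j').mpr ⟨hc, h⟩)
      refine ⟨insert (j' + 1) (insert m B), (hmoves _).mpr ⟨j' + 1, by omega, hjs, rfl⟩, ?_⟩
      rw [claimA (j' + 1) (by omega) (by omega) hjs, Nat.add_sub_cancel]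
      exact hq

/-- if a_1 ≤ k-1 then G(a_1,...,a_k) = G(a_2-1,...,a_k-1). -/
theorem maxWelter_reduce_size (k : ℕ) (hk : 3 ≤ k) (a : Fin k → ℕ)
    (ha : StrictMono a) (h1 : a ⟨0, by omega⟩ ≤ k - 1) :
    grundy (Finset.image a Finset.univ) =
      grundy (Finset.image
        (fun i : Fin (k - 1) => a ⟨i.1 + 1, by have := i.2; omega⟩ - 1)
        Finset.univ) := by

  have h0 : (0 : ℕ) < k := by omega
  have hm : a ⟨0, h0⟩ ∈ Finset.image a Finset.univ :=
    Finset.mem_image_of_mem a (Finset.mem_univ _)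
  have hlb : ∀ x ∈ Finset.image a Finset.univ, a ⟨0, h0⟩ ≤ x := by
    intro x hx
    obtain ⟨i, -, rfl⟩ := Finset.mem_image.mp hx
    exact ha.monotone (Fin.mk_le_of_le_val (Nat.zero_le _))
  have hcard : (Finset.image a Finset.univ).card = k := by
    rw [Finset.card_image_of_injective _ ha.injective, Finset.card_univ, Fintype.card_fin]
  have hmain := key _ (Finset.image a Finset.univ) (a ⟨0, h0⟩) rfl hm hlb
    (by omega) (by omega)
  rw [hmain]
  congr 1
  ext x
  simp only [Finset.mem_image, Finset.mem_erase, Finset.mem_univ, true_and]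
  constructor
  · rintro ⟨y, ⟨hne, i, rfl⟩, rfl⟩
    have hi1 : 1 ≤ i.1 := by
      rcases Nat.eq_zero_or_pos i.1 with h | h
      · exact absurd (congrArg a (Fin.ext h)) hne
      · exact h
    refine ⟨⟨i.1 - 1, by omega⟩, ?_⟩
    apply congrArg (fun y => y - 1)
    apply congrArg a
    apply Fin.ext
    simp
    omega
  · rintro ⟨i, rfl⟩
    refine ⟨a ⟨i.1 + 1, by have := i.2; omega⟩, ⟨?_, ⟨_, rfl⟩⟩, rfl⟩
    intro hc
    have := ha.injective hc
    simp [Fin.ext_iff] at this
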